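/- Let A satisfy A𝟏 = 0 and Ax = e_R − e_L, with Ā invertible and G₂ as above. Then A G₂ 𝟏 = 𝟏 − ((n+1)/2) e_L − ((n+1)/2) e_R, and consequently (1/(n+1)) A G₂ 𝟏 + (1/2) A x = 𝟏/(n+1) − e_L. -/

import Mathlib

open Matrix

noncomputable section

def onesVec (n : ℕ) : Fin (n+1) → ℝ := fun _ => 1

def gridVec (n : ℕ) : Fin (n+1) → ℝ := fun i => (i : ℝ) / n

def eL (n : ℕ) : Fin (n+1) → ℝ := fun i => if i.1 = 0 then 1 else 0

def eR (n : ℕ) : Fin (n+1) → ℝ := fun i => if i.1 = n then 1 else 0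

def interiorEmb (n : ℕ) : Fin (n-1) → Fin (n+1) :=
  fun i => ⟨i.1 + 1, by have := i.isLt; omega⟩

def centralBlock (n : ℕ) (A : Matrix (Fin (n+1)) (Fin (n+1)) ℝ) :
    Matrix (Fin (n-1)) (Fin (n-1)) ℝ :=
  A.submatrix (interiorEmb n) (interiorEmb n)

def pad (n : ℕ) (B : Matrix (Fin (n-1)) (Fin (n-1)) ℝ) :
    Matrix (Fin (n+1)) (Fin (n+1)) ℝ :=
  fun i j =>
    if hi : 0 < i.1 ∧ i.1 < n then
      if hj : 0 < j.1 ∧ j.1 < n then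
        B ⟨i.1 - 1, by omega⟩ ⟨j.1 - 1, by omega⟩
      else 0
    else 0

def G2 (n : ℕ) (A : Matrix (Fin (n+1)) (Fin (n+1)) ℝ) :
    Matrix (Fin (n+1)) (Fin (n+1)) ℝ :=
  pad n (centralBlock n A)⁻¹

def Aplus (n : ℕ) (A : Matrix (Fin (n+1)) (Fin (n+1)) ℝ) :
    Matrix (Fin (n+1)) (Fin (n+1)) ℝ :=
  (1 - ((n : ℝ) + 1)⁻¹ • vecMulVec (onesVec n) (onesVec n)) * G2 n A *
      (1 - ((n : ℝ) + 1)⁻¹ • vecMulVec (onesVec n) (onesVec n)) +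
    vecMulVec (gridVec n - (1/2 : ℝ) • onesVec n)
      (gridVec n - (1/2 : ℝ) • onesVec n)

/-! Put u = G₂𝟏 and v = Au. Since u vanishes at both end nodes and equals Ā⁻¹𝟏 inside,
v = 1 at every interior node. Symmetry of A turns A𝟏 = 0 and Ax = e_R − e_L into
𝟏ᵀv = 0 and xᵀv = u_R − u_L = 0, and these two moment conditions force both boundary
values of v to be −(n − 1)/2. -/

theorem Matrix.IsSymm.dotProduct_mulVec_comm {ι R : Type*} [Fintype ι] [CommSemiring R]
    {A : Matrix ι ι R} (hA : A.IsSymm) (v w : ι → R) :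
    v ⬝ᵥ (A *ᵥ w) = (A *ᵥ v) ⬝ᵥ w := by
  rw [dotProduct_mulVec, ← vecMul_transpose, hA.eq]

section Boundary

variable {n : ℕ}

theorem eL_dotProduct (w : Fin (n+1) → ℝ) : eL n ⬝ᵥ w = w 0 := by
  simp only [eL, dotProduct, ite_mul, one_mul, zero_mul, Fin.val_eq_zero_iff,
    Finset.sum_ite_eq', Finset.mem_univ, if_true]

theorem eR_dotProduct (w : Fin (n+1) → ℝ) : eR n ⬝ᵥ w = w (Fin.last n) := by
  have hlast : ∀ i : Fin (n+1), i.1 = n ↔ i = Fin.last n := fun i => by simp [Fin.ext_iff]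
  simp only [eR, dotProduct, ite_mul, one_mul, zero_mul, hlast,
    Finset.sum_ite_eq', Finset.mem_univ, if_true]

theorem onesVec_dotProduct_onesVec : onesVec n ⬝ᵥ onesVec n = n + 1 := by
  simp [onesVec, dotProduct]

theorem gridVec_zero : gridVec n 0 = 0 := by
  simp [gridVec]

theorem gridVec_last (hn : n ≠ 0) : gridVec n (Fin.last n) = 1 := by
  simp [gridVec, hn]

theorem gridVec_dotProduct_onesVec (hn : n ≠ 0) :
    gridVec n ⬝ᵥ onesVec n = (n + 1) / 2 := by
  have hsum : ∑ i : Fin (n+1), (i : ℝ) = (n + 1) * n / 2 := by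
    rw [Fin.sum_univ_eq_sum_range (fun i => (i : ℝ)), ← Nat.cast_sum,
      Finset.sum_range_id, Nat.cast_div_charZero (Nat.even_mul_pred_self _).two_dvd]
    simp
  simp only [dotProduct, gridVec, onesVec, mul_one, ← Finset.sum_div, hsum]
  field_simp

end Boundary

section Interior

variable {n : ℕ}

theorem mem_range_interiorEmb {i : Fin (n+1)} :
    i ∈ Set.range (interiorEmb n) ↔ 0 < i.1 ∧ i.1 < n := by
  constructor
  · rintro ⟨j, rfl⟩
    simp only [interiorEmb]
    omega
  · intro hi
    exact ⟨⟨i.1 - 1, by omega⟩, Fin.ext (by simp only [interiorEmb]; omega)⟩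

theorem interiorEmb_injective : Function.Injective (interiorEmb n) := by
  intro i j h
  simpa [interiorEmb, Fin.ext_iff] using h

theorem sum_eq_sum_interiorEmb {M : Type*} [AddCommMonoid M] {f : Fin (n+1) → M}
    (hf : ∀ i : Fin (n+1), ¬(0 < i.1 ∧ i.1 < n) → f i = 0) :
    ∑ i, f i = ∑ j, f (interiorEmb n j) :=
  (Fintype.sum_of_injective _ interiorEmb_injective _ f
    (fun i hi => hf i (mem_range_interiorEmb.not.mp hi)) (fun _ => rfl)).symm

theorem pad_interiorEmb (C : Matrix (Fin (n-1)) (Fin (n-1)) ℝ) (i j : Fin (n-1)) :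
    pad n C (interiorEmb n i) (interiorEmb n j) = C i j := by
  simp only [pad, dif_pos (mem_range_interiorEmb.mp ⟨i, rfl⟩),
    dif_pos (mem_range_interiorEmb.mp ⟨j, rfl⟩)]
  rfl

theorem pad_apply_of_not_interior_left (C : Matrix (Fin (n-1)) (Fin (n-1)) ℝ)
    {i : Fin (n+1)} (hi : ¬(0 < i.1 ∧ i.1 < n)) (j : Fin (n+1)) : pad n C i j = 0 :=
  dif_neg hi

theorem pad_apply_of_not_interior_right (C : Matrix (Fin (n-1)) (Fin (n-1)) ℝ)
    (i : Fin (n+1)) {j : Fin (n+1)} (hj : ¬(0 < j.1 ∧ j.1 < n)) : pad n C i j = 0 := by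
  simp only [pad, dif_neg hj, dite_eq_ite, ite_self]

theorem pad_mulVec_apply_of_not_interior (C : Matrix (Fin (n-1)) (Fin (n-1)) ℝ)
    (w : Fin (n+1) → ℝ) {i : Fin (n+1)} (hi : ¬(0 < i.1 ∧ i.1 < n)) :
    (pad n C *ᵥ w) i = 0 := by
  simp only [mulVec, dotProduct, pad_apply_of_not_interior_left C hi, zero_mul,
    Finset.sum_const_zero]

theorem pad_mulVec_interiorEmb (C : Matrix (Fin (n-1)) (Fin (n-1)) ℝ)
    (w : Fin (n+1) → ℝ) (i : Fin (n-1)) :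
    (pad n C *ᵥ w) (interiorEmb n i) = (C *ᵥ (w ∘ interiorEmb n)) i := by
  rw [mulVec, dotProduct, sum_eq_sum_interiorEmb fun j hj => by
    rw [pad_apply_of_not_interior_right C _ hj, zero_mul]]
  simp only [pad_interiorEmb, mulVec, dotProduct, Function.comp_apply]

theorem mulVec_interiorEmb_of_not_interior_eq_zero (A : Matrix (Fin (n+1)) (Fin (n+1)) ℝ)
    {w : Fin (n+1) → ℝ} (hw : ∀ j : Fin (n+1), ¬(0 < j.1 ∧ j.1 < n) → w j = 0)
    (i : Fin (n-1)) :
    (A *ᵥ w) (interiorEmb n i) = (centralBlock n A *ᵥ (w ∘ interiorEmb n)) i := by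
  rw [mulVec, dotProduct, sum_eq_sum_interiorEmb fun j hj => by rw [hw j hj, mul_zero]]
  rfl

theorem mulVec_G2_mulVec_interiorEmb {A : Matrix (Fin (n+1)) (Fin (n+1)) ℝ}
    (hinv : IsUnit (centralBlock n A).det) (w : Fin (n+1) → ℝ) (i : Fin (n-1)) :
    (A *ᵥ (G2 n A *ᵥ w)) (interiorEmb n i) = w (interiorEmb n i) := by
  have hG : (G2 n A *ᵥ w) ∘ interiorEmb n = (centralBlock n A)⁻¹ *ᵥ (w ∘ interiorEmb n) :=
    funext (pad_mulVec_interiorEmb _ w)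
  rw [mulVec_interiorEmb_of_not_interior_eq_zero A (w := G2 n A *ᵥ w)
      (fun j hj => pad_mulVec_apply_of_not_interior _ w hj),
    hG, mulVec_mulVec, mul_nonsing_inv _ hinv, one_mulVec, Function.comp_apply]

end Interior

theorem eq_of_interior_eq_one_of_orthogonal {n : ℕ} (hn : n ≠ 0) {v : Fin (n+1) → ℝ}
    (hint : ∀ i : Fin (n-1), v (interiorEmb n i) = 1)
    (hones : onesVec n ⬝ᵥ v = 0) (hgrid : gridVec n ⬝ᵥ v = 0) :
    v = onesVec n - (((n : ℝ) + 1)/2) • eL n - (((n : ℝ) + 1)/2) • eR n := by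
  have hdecomp : v = onesVec n + (v 0 - 1) • eL n + (v (Fin.last n) - 1) • eR n := by
    funext i
    by_cases hi : 0 < i.1 ∧ i.1 < n
    · obtain ⟨j, rfl⟩ := mem_range_interiorEmb.mpr hi
      simp [onesVec, eL, eR, hint, hi.1.ne', hi.2.ne]
    · obtain rfl | rfl : i = 0 ∨ i = Fin.last n := by
        simp only [Fin.ext_iff, Fin.val_zero, Fin.val_last]; omega
      · simp [onesVec, eL, eR, Ne.symm hn]
      · simp [onesVec, eL, eR, hn]
  rw [hdecomp] at hones hgrid
  simp only [dotProduct_add, dotProduct_smul, dotProduct_comm _ (eL n),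
    dotProduct_comm _ (eR n), eL_dotProduct, eR_dotProduct, onesVec_dotProduct_onesVec,
    gridVec_dotProduct_onesVec hn, gridVec_zero, gridVec_last hn, smul_eq_mul] at hones hgrid
  have h0 : v 0 - 1 = -(((n : ℝ) + 1)/2) := by simp only [onesVec] at hones; linarith
  have hlast : v (Fin.last n) - 1 = -(((n : ℝ) + 1)/2) := by linarith
  rw [hdecomp, h0, hlast]
  module

theorem A_G2_ones_identity
    (n : ℕ) (hn : 2 ≤ n) (A : Matrix (Fin (n+1)) (Fin (n+1)) ℝ)
    (hsym : A.IsSymm)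
    (h1 : A *ᵥ onesVec n = 0)
    (hx : A *ᵥ gridVec n = eR n - eL n)
    (hinv : IsUnit (centralBlock n A).det) :
    A *ᵥ (G2 n A *ᵥ onesVec n) =
      onesVec n - (((n : ℝ) + 1)/2) • eL n - (((n : ℝ) + 1)/2) • eR n ∧
    ((n : ℝ) + 1)⁻¹ • (A *ᵥ (G2 n A *ᵥ onesVec n)) + (1/2 : ℝ) • (A *ᵥ gridVec n) =
      ((n : ℝ) + 1)⁻¹ • onesVec n - eL n := by
  have hu0 : (G2 n A *ᵥ onesVec n) 0 = 0 :=
    pad_mulVec_apply_of_not_interior _ _ (by simp)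
  have hulast : (G2 n A *ᵥ onesVec n) (Fin.last n) = 0 :=
    pad_mulVec_apply_of_not_interior _ _ (by simp)
  have hAu := eq_of_interior_eq_one_of_orthogonal (by omega : n ≠ 0)
    (fun i => mulVec_G2_mulVec_interiorEmb hinv (onesVec n) i)
    (by rw [hsym.dotProduct_mulVec_comm, h1, zero_dotProduct])
    (by rw [hsym.dotProduct_mulVec_comm, hx, sub_dotProduct, eR_dotProduct, eL_dotProduct,
      hu0, hulast, sub_zero])
  refine ⟨hAu, ?_⟩
  rw [hAu, hx]
  match_scalars <;> field_simp <;> ring
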